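/- Faces of a face of a polytope are obtained by small perturbations of the normal vector: if K ⊆ ℝ^n is the convex hull of a nonempty finite set and ξ, η ∈ ℝ^n, then there exists t₀ > 0 such that for all t with 0 < t ≤ t₀, one has K^{ξ + tη} = (K^ξ)^η. -/

import Mathlib

open scoped Pointwise RealInnerProductSpace BigOperators

noncomputable section

/-- The face of a set `K` in direction `ξ`: points of `K` maximizing `⟪·, ξ⟫`. -/
def face {n : ℕ} (K : Set (EuclideanSpace ℝ (Fin n))) (ξ : EuclideanSpace ℝ (Fin n)) :
    Set (EuclideanSpace ℝ (Fin n)) :=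
  {x ∈ K | ∀ y ∈ K, ⟪y, ξ⟫ ≤ ⟪x, ξ⟫}

/-- The `i`-th standard basis vector of `ℝⁿ`. -/
def stdVec (n : ℕ) (i : Fin n) : EuclideanSpace ℝ (Fin n) := EuclideanSpace.single i 1

/-- The all-ones vector `S = (1,…,1)`. -/
def allOnes (n : ℕ) : EuclideanSpace ℝ (Fin n) := WithLp.toLp 2 (fun _ => (1 : ℝ))

/-- The segment `q_{ij} = [e_i, e_j]`. -/
def qseg (n : ℕ) (i j : Fin n) : Set (EuclideanSpace ℝ (Fin n)) :=
  segment ℝ (stdVec n i) (stdVec n j)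

/-- The point `R_i = n·e_i − Σ_j e_j` (coordinate `n−1` at position `i`, `−1` elsewhere). -/
def Rpt (n : ℕ) (i : Fin n) : EuclideanSpace ℝ (Fin n) := (n : ℝ) • stdVec n i - allOnes n

/-- The segment `r_i = [0, R_i]`. -/
def rseg (n : ℕ) (i : Fin n) : Set (EuclideanSpace ℝ (Fin n)) := segment ℝ 0 (Rpt n i)

/-- The standard permutohedron `Π_n`: the convex hull of all points obtained by
permuting the coordinates of `(1, 2, …, n)`. -/
def permutohedron (n : ℕ) : Set (EuclideanSpace ℝ (Fin n)) :=
  convexHull ℝ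
    {x : EuclideanSpace ℝ (Fin n) | ∃ σ : Equiv.Perm (Fin n), ∀ i, x i = ((σ i : ℕ) : ℝ) + 1}

/-!
The face of `conv V` in direction `ζ` is the convex hull of the face of the vertex set `V`, so it
suffices to compare faces of the finite set `V`. A vertex `v` lies in `V^{ξ + tη}` iff it beats
every `w ∈ V` in `⟪·, ξ⟫ + t ⟪·, η⟫`, and for each of the finitely many pairs `(v, w)` this
comparison agrees, for all small `t > 0`, with the lexicographic comparison of
`(⟪·, ξ⟫, ⟪·, η⟫)`, which is exactly membership in `(V^ξ)^η`.
-/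

open Filter Set Topology

theorem eventually_add_mul_le_add_mul_iff (a b c d : ℝ) :
    ∀ᶠ t in 𝓝[>] 0, (c + t * d ≤ a + t * b ↔ c < a ∨ c = a ∧ d ≤ b) := by
  have hcont : ∀ p q : ℝ, ContinuousAt (fun t : ℝ => p + t * q) 0 := fun p q => by fun_prop
  rcases lt_trichotomy c a with hca | rfl | hac
  · have h := (hcont c d).eventually_lt (hcont a b) (by simpa using hca)
    filter_upwards [nhdsWithin_le_nhds h] with t ht
    simp [ht.le, hca]
  · filter_upwards [self_mem_nhdsWithin] with t (ht : 0 < t)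
    simp [mul_le_mul_iff_right₀ ht]
  · have h := (hcont a b).eventually_lt (hcont c d) (by simpa using hac)
    filter_upwards [nhdsWithin_le_nhds h] with t ht
    simp [ht.not_ge, hac.not_gt, hac.ne']

section

variable {n : ℕ}

theorem isLinearMap_inner_left (ζ : EuclideanSpace ℝ (Fin n)) :
    IsLinearMap ℝ fun y : EuclideanSpace ℝ (Fin n) => ⟪y, ζ⟫ :=
  (innerSLFlip ℝ ζ).toLinearMap.isLinear

theorem face_convexHull (V : Set (EuclideanSpace ℝ (Fin n))) (ζ : EuclideanSpace ℝ (Fin n)) :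
    face (convexHull ℝ V) ζ = convexHull ℝ (face V ζ) := by
  classical
  apply Subset.antisymm
  · rintro _ ⟨hx, hmax⟩
    rw [convexHull_eq] at hx
    obtain ⟨ι, t, w, z, hw₀, hw₁, hz, rfl⟩ := hx
    set x := t.centerMass w z
    have hgap : ∀ i ∈ t, 0 ≤ w i * (⟪x, ζ⟫ - ⟪z i, ζ⟫) := fun i hi =>
      mul_nonneg (hw₀ i hi) (sub_nonneg.2 (hmax _ (subset_convexHull ℝ V (hz i hi))))
    have hgap_sum : ∑ i ∈ t, w i * (⟪x, ζ⟫ - ⟪z i, ζ⟫) = 0 := by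
      have hx_inner : ⟪x, ζ⟫ = ∑ i ∈ t, w i * ⟪z i, ζ⟫ := by
        simp only [x, Finset.centerMass_eq_of_sum_1 _ _ hw₁, sum_inner, real_inner_smul_left]
      simp only [mul_sub, Finset.sum_sub_distrib, ← Finset.sum_mul, hw₁, one_mul, ← hx_inner,
        sub_self]
    have hface : ∀ i ∈ t, w i ≠ 0 → z i ∈ face V ζ := by
      intro i hi hwi
      have hzi : ⟪z i, ζ⟫ = ⟪x, ζ⟫ := by
        have := (Finset.sum_eq_zero_iff_of_nonneg hgap).1 hgap_sum i hi
        linarith [(mul_eq_zero.1 this).resolve_left hwi]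
      exact ⟨hz i hi, fun y hy => hzi ▸ hmax y (subset_convexHull ℝ V hy)⟩
    have hx_filter : {i ∈ t | w i ≠ 0}.centerMass w z = x := Finset.centerMass_filter_ne_zero z
    rw [← hx_filter]
    refine Finset.centerMass_mem_convexHull _ (fun i hi => hw₀ i (Finset.mem_filter.1 hi).1)
      (by rw [Finset.sum_filter_ne_zero, hw₁]; exact one_pos) fun i hi => ?_
    exact hface i (Finset.mem_filter.1 hi).1 (Finset.mem_filter.1 hi).2
  · intro x hx
    obtain ⟨m, hmV, hm⟩ := convexHull_nonempty_iff.1 ⟨x, hx⟩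
    have hub : convexHull ℝ V ⊆ {y | ⟪y, ζ⟫ ≤ ⟪m, ζ⟫} :=
      convexHull_min hm (convex_halfSpace_le (isLinearMap_inner_left ζ) _)
    have hlb : convexHull ℝ (face V ζ) ⊆ {y | ⟪m, ζ⟫ ≤ ⟪y, ζ⟫} :=
      convexHull_min (fun v hv => hv.2 m hmV) (convex_halfSpace_ge (isLinearMap_inner_left ζ) _)
    exact ⟨convexHull_mono (sep_subset _ _) hx, fun y hy => (hub hy).trans (hlb hx)⟩

theorem face_face (V : Set (EuclideanSpace ℝ (Fin n))) (ξ η : EuclideanSpace ℝ (Fin n)) :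
    face (face V ξ) η =
      {v ∈ V | ∀ w ∈ V, ⟪w, ξ⟫ < ⟪v, ξ⟫ ∨ ⟪w, ξ⟫ = ⟪v, ξ⟫ ∧ ⟪w, η⟫ ≤ ⟪v, η⟫} := by
  ext v
  constructor
  · rintro ⟨⟨hv, hvξ⟩, hvη⟩
    refine ⟨hv, fun w hw => (hvξ w hw).lt_or_eq.imp_right fun hwv => ⟨hwv, hvη w ⟨hw, ?_⟩⟩⟩
    exact fun u hu => hwv ▸ hvξ u hu
  · rintro ⟨hv, hlex⟩
    have hvξ : ∀ w ∈ V, ⟪w, ξ⟫ ≤ ⟪v, ξ⟫ := fun w hw =>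
      (hlex w hw).elim le_of_lt fun h => h.1.le
    refine ⟨⟨hv, hvξ⟩, fun w ⟨hw, hwξ⟩ => ?_⟩
    exact ((hlex w hw).resolve_left (hwξ v hv).not_gt).2

theorem eventually_face_add_smul {V : Set (EuclideanSpace ℝ (Fin n))} (hV : V.Finite)
    (ξ η : EuclideanSpace ℝ (Fin n)) :
    ∀ᶠ t in 𝓝[>] (0 : ℝ), face V (ξ + t • η) = face (face V ξ) η := by
  have h : ∀ᶠ t in 𝓝[>] (0 : ℝ), ∀ v ∈ V, ∀ w ∈ V,
      (⟪w, ξ⟫ + t * ⟪w, η⟫ ≤ ⟪v, ξ⟫ + t * ⟪v, η⟫ ↔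
        ⟪w, ξ⟫ < ⟪v, ξ⟫ ∨ ⟪w, ξ⟫ = ⟪v, ξ⟫ ∧ ⟪w, η⟫ ≤ ⟪v, η⟫) := by
    simp only [hV.eventually_all]
    exact fun v _ w _ => eventually_add_mul_le_add_mul_iff _ _ _ _
  filter_upwards [h] with t ht
  rw [face_face]
  ext v
  simp only [face, mem_ofPred_eq, inner_add_right, real_inner_smul_right]
  exact and_congr_right fun hv => forall₂_congr fun w hw => ht v hv w hw

end

theorem face_perturbation_general (n : ℕ) (V : Set (EuclideanSpace ℝ (Fin n)))
    (hVfin : V.Finite)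
    (K : Set (EuclideanSpace ℝ (Fin n))) (hK : K = convexHull ℝ V)
    (ξ η : EuclideanSpace ℝ (Fin n)) :
    ∃ t₀ : ℝ, 0 < t₀ ∧ ∀ t : ℝ, 0 < t → t ≤ t₀ →
      face K (ξ + t • η) = face (face K ξ) η := by
  obtain ⟨t₀, ht₀, hsub⟩ := mem_nhdsGT_iff_exists_Ioc_subset.1 (eventually_face_add_smul hVfin ξ η)
  refine ⟨t₀, ht₀, fun t ht htt₀ => ?_⟩
  rw [hK, face_convexHull, face_convexHull, face_convexHull, hsub ⟨ht, htt₀⟩]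

/-- Faces of a face of a polytope are obtained by small perturbations of the
normal vector: `K^{ξ + tη} = (K^ξ)^η` for all sufficiently small `t > 0`. -/
theorem face_perturbation (n : ℕ) (V : Set (EuclideanSpace ℝ (Fin n)))
    (hVfin : V.Finite) (hVne : V.Nonempty)
    (K : Set (EuclideanSpace ℝ (Fin n))) (hK : K = convexHull ℝ V)
    (ξ η : EuclideanSpace ℝ (Fin n)) :
    ∃ t₀ : ℝ, 0 < t₀ ∧ ∀ t : ℝ, 0 < t → t ≤ t₀ →
      face K (ξ + t • η) = face (face K ξ) η :=
  face_perturbation_general n V hVfin K hK ξ η
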